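/- arXiv:1112.0974 — 6 statements merged into one kernel-verified Lean document; each statement's English description precedes it below -/
import Mathlib

section
/- Let l ≥ 1 and k ≥ 1. Let γ^1, ..., γ^k with γ^{k'} = (i^{k'}, α^{k'}) be independent random variables, each uniformly distributed on {1,...,l} × [0,1]. Define c_j^k = min({α^{k'} : 1 ≤ k' ≤ k, i^{k'} = j} ∪ {1}) for each j ∈ {1,...,l}. Then the probability that ∑_{j=1}^l c_j^k < 1 satisfies P(∑_{j=1}^l c_j^k < 1) ≥ ∑_{p ∈ {0,1}^l} (−1)^{p_1 + ... + p_l} (∑_{j=1}^l (1/l)(1 − 1/l)^{p_j})^k. -/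
/-!
If every label `j` is drawn at least once with a threshold below `1 / l`, then every `c_j` is
below `1 / l` and `∑ j, c_j < 1`. The complement of this event is the union over `j` of the
events "label `j` has no draw below `1 / l`". For a set `u` of labels, the intersection of these
events says that each of the `k` independent draws avoids `u × [0, 1 / l)`, so it has probability
`(1 - |u| / l²) ^ k`. Inclusion–exclusion then writes the probability of the first event as the
stated alternating sum, indexed by the indicator functions `p ∈ {0, 1}^l` of the sets `u`.
-/

open MeasureTheory Finset

theorem measureReal_compl_biUnion_eq_sum_powerset {Ω ι : Type*} [MeasurableSpace Ω]
    {μ : Measure Ω} [IsProbabilityMeasure μ] {t : Finset ι} {s : ι → Set Ω}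
    (hs : ∀ i ∈ t, MeasurableSet (s i)) :
    μ.real (⋃ i ∈ t, s i)ᶜ = ∑ u ∈ t.powerset, (-1 : ℝ) ^ #u * μ.real (⋂ i ∈ u, s i) := by
  classical
  have hempty : t.powerset.filter (fun u => ¬u.Nonempty) = {∅} := by
    ext u
    simp only [mem_filter, mem_powerset, not_nonempty_iff_eq_empty, mem_singleton]
    exact ⟨And.right, fun hu => ⟨hu ▸ empty_subset t, hu⟩⟩
  rw [probReal_compl_eq_one_sub (t.measurableSet_biUnion hs),
    measureReal_biUnion_eq_sum_powerset hs,
    ← sum_filter_add_sum_filter_not t.powerset Finset.Nonempty, hempty]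
  simp [pow_succ, sum_neg_distrib]
  ring

theorem Fintype.sum_fin_two_pi_eq_sum_finset {α M : Type*} [Fintype α] [DecidableEq α]
    [AddCommMonoid M] (g : (α → Fin 2) → M) :
    ∑ p, g p = ∑ u : Finset α, g fun j => if j ∈ u then 1 else 0 := by
  refine (Fintype.sum_bijective (fun u : Finset α => fun j => if j ∈ u then 1 else 0)
    ⟨fun u v huv => ?_, fun p => ⟨({j | p j = 1} : Finset α), funext fun j => ?_⟩⟩ _ _
    fun _ => rfl).symm
  · ext j
    have := congrFun huv j
    by_cases hu : j ∈ u <;> by_cases hv : j ∈ v <;> simp_all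
  · rcases Fin.exists_fin_two.mp ⟨p j, rfl⟩ with h | h <;> simp [h]

theorem PMF.toMeasure_uniformOfFintype_real_apply {α : Type*} [Fintype α] [Nonempty α]
    [MeasurableSpace α] [MeasurableSingletonClass α] (s : Finset α) :
    (PMF.uniformOfFintype α).toMeasure.real s = #s / Fintype.card α := by
  simp [measureReal_def, PMF.toMeasure_uniformOfFintype_apply _ s.measurableSet,
    ENNReal.toReal_div]

theorem volume_restrict_Icc_real_Iio {a : ℝ} (ha : a ∈ Set.Icc (0 : ℝ) 1) :
    (volume.restrict (Set.Icc (0 : ℝ) 1)).real (Set.Iio a) = a := by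
  have hIco : Set.Iio a ∩ Set.Icc 0 1 = Set.Ico 0 a := by
    ext x
    simp only [Set.mem_inter_iff, Set.mem_Iio, Set.mem_Icc, Set.mem_Ico]
    grind
  simp [measureReal_restrict_apply measurableSet_Iio, hIco, ha.1]

section Draws

variable {ι α : Type*}

def noDrawBelow (a : ℝ) (j : α) : Set (ι → α × ℝ) := {γ | ∀ i, (γ i).1 = j → a ≤ (γ i).2}

theorem biInter_noDrawBelow (a : ℝ) (u : Finset α) :
    ⋂ j ∈ u, noDrawBelow (ι := ι) a j = Set.univ.pi fun _ => ((u : Set α) ×ˢ Set.Iio a)ᶜ := by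
  ext γ
  simp only [noDrawBelow, Set.mem_iInter, Set.mem_ofPred_eq, Set.mem_pi, Set.mem_univ,
    true_implies, Set.mem_compl_iff, Set.mem_prod, mem_coe, Set.mem_Iio, not_and, not_lt]
  exact ⟨fun h i hi => h _ hi i rfl, fun h j hj i hij => h i (hij ▸ hj)⟩

theorem measurableSet_noDrawBelow [Countable ι] [MeasurableSpace α]
    [MeasurableSingletonClass α] (a : ℝ) (j : α) : MeasurableSet (noDrawBelow (ι := ι) a j) := by
  have h := biInter_noDrawBelow (ι := ι) a {j}
  simp only [mem_singleton, Set.iInter_iInter_eq_left] at h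
  rw [h]
  exact .univ_pi fun _ => ((Finset.measurableSet _).prod measurableSet_Iio).compl

theorem measureReal_biInter_noDrawBelow [Fintype ι] [Fintype α] [Nonempty α] [MeasurableSpace α]
    [MeasurableSingletonClass α] (ρ : Measure ℝ) [IsProbabilityMeasure ρ] (a : ℝ)
    (u : Finset α) :
    (Measure.pi fun _ : ι => (PMF.uniformOfFintype α).toMeasure.prod ρ).real
        (⋂ j ∈ u, noDrawBelow a j)
      = (1 - #u / Fintype.card α * ρ.real (Set.Iio a)) ^ Fintype.card ι := by
  rw [biInter_noDrawBelow, measureReal_def, Measure.pi_pi, ENNReal.toReal_prod, prod_const,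
    card_univ]
  simp_rw [← measureReal_def]
  rw [probReal_compl_eq_one_sub ((Finset.measurableSet _).prod measurableSet_Iio),
    measureReal_prod_prod, PMF.toMeasure_uniformOfFintype_real_apply]

theorem sInf_insert_one_lt_of_notMem_noDrawBelow [Finite ι] {γ : ι → α × ℝ} {a : ℝ} {j : α}
    (hγ : γ ∉ noDrawBelow a j) :
    sInf (insert (1 : ℝ) {b | ∃ i, (γ i).1 = j ∧ (γ i).2 = b}) < a := by
  simp only [noDrawBelow, Set.mem_ofPred_eq, not_forall, not_le] at hγ
  obtain ⟨i, hij, hlt⟩ := hγ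
  have hfin : (insert (1 : ℝ) {b | ∃ i, (γ i).1 = j ∧ (γ i).2 = b}).Finite :=
    ((Set.finite_range fun i => (γ i).2).subset <| by
      rintro _ ⟨i, -, rfl⟩; exact Set.mem_range_self i).insert 1
  exact (csInf_le hfin.bddBelow (Set.mem_insert_of_mem _ ⟨i, hij, rfl⟩)).trans_lt hlt

theorem sum_sInf_insert_one_lt [Finite ι] [Fintype α] [Nonempty α] {γ : ι → α × ℝ} {a : ℝ}
    (hγ : ∀ j, γ ∉ noDrawBelow a j) :
    ∑ j, sInf (insert (1 : ℝ) {b | ∃ i, (γ i).1 = j ∧ (γ i).2 = b}) < Fintype.card α * a :=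
  calc _ < ∑ _j : α, a := sum_lt_sum_of_nonempty univ_nonempty
        fun j _ => sInf_insert_one_lt_of_notMem_noDrawBelow (hγ j)
    _ = Fintype.card α * a := by simp

end Draws

theorem stmt_0_general (l k : ℕ) [NeZero l]
    (μ : Measure (Fin l × ℝ))
    (hμ : μ = (PMF.uniformOfFintype (Fin l)).toMeasure.prod
      (volume.restrict (Set.Icc (0:ℝ) 1)))
    (π : Measure (Fin k → Fin l × ℝ))
    (hπ : π = Measure.pi fun _ => μ)
    (c : (Fin k → Fin l × ℝ) → Fin l → ℝ)
    (hc : ∀ γ j, c γ j = sInf (insert (1:ℝ) {a : ℝ | ∃ k', (γ k').1 = j ∧ (γ k').2 = a})) :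
    ∑ p : Fin l → Fin 2, (-1 : ℝ) ^ (∑ j, ((p j : ℕ))) *
        (∑ j, (1 / (l:ℝ)) * (1 - 1 / (l:ℝ)) ^ ((p j : ℕ))) ^ k
      ≤ (π {γ | ∑ j, c γ j < 1}).toReal := by
  subst hμ hπ
  have : IsProbabilityMeasure (volume.restrict (Set.Icc (0 : ℝ) 1)) := ⟨by simp⟩
  have hl : (0 : ℝ) < l := Nat.cast_pos.mpr (NeZero.pos l)
  have ha : 1 / (l : ℝ) ∈ Set.Icc 0 1 :=
    ⟨by positivity, (div_le_one hl).mpr (Nat.one_le_cast.mpr NeZero.one_le)⟩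
  have hsub : (⋃ j ∈ univ, noDrawBelow (1 / (l : ℝ)) j)ᶜ ⊆ {γ | ∑ j, c γ j < 1} := by
    intro γ hγ
    have h := sum_sInf_insert_one_lt (α := Fin l) (γ := γ) (a := 1 / l) (by simpa using hγ)
    rw [Fintype.card_fin, mul_one_div_cancel hl.ne'] at h
    simpa [hc] using h
  calc _ = ∑ u ∈ (univ : Finset (Fin l)).powerset, (-1 : ℝ) ^ #u * (1 - #u / l * (1 / l)) ^ k := by
        rw [Fintype.sum_fin_two_pi_eq_sum_finset, powerset_univ]
        refine sum_congr rfl fun u _ => ?_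
        have hu : #u ≤ l := (card_le_univ u).trans_eq (Fintype.card_fin l)
        simp [apply_ite, sum_ite, filter_not, card_univ_sdiff, Nat.cast_sub hu]
        field_simp
        ring
    _ = (Measure.pi fun _ => _).real (⋃ j ∈ univ, noDrawBelow (1 / (l : ℝ)) j)ᶜ := by
        rw [measureReal_compl_biUnion_eq_sum_powerset fun j _ => measurableSet_noDrawBelow _ j]
        simp_rw [measureReal_biInter_noDrawBelow, volume_restrict_Icc_real_Iio ha,
          Fintype.card_fin]
    _ ≤ _ := measureReal_mono hsub

/-- For `l ≥ 1`, `k ≥ 1`, and `k` independent draws `γ^{k'} = (i^{k'}, α^{k'})`,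
each uniform on `{1,…,l} × [0,1]` (modeled by the `k`-fold product of the product of the
uniform measure on `Fin l` and Lebesgue measure restricted to `[0,1]`), with
`c_j^k = min({α^{k'} : i^{k'} = j} ∪ {1})`, the probability that `∑_j c_j^k < 1` is at least
`∑_{p ∈ {0,1}^l} (−1)^{∑_j p_j} (∑_j (1/l)(1 − 1/l)^{p_j})^k`. -/
theorem stmt_0 (l k : ℕ) [NeZero l] (hk : 1 ≤ k)
    (μ : Measure (Fin l × ℝ))
    (hμ : μ = (PMF.uniformOfFintype (Fin l)).toMeasure.prod
      (volume.restrict (Set.Icc (0:ℝ) 1)))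
    (π : Measure (Fin k → Fin l × ℝ))
    (hπ : π = Measure.pi fun _ => μ)
    (c : (Fin k → Fin l × ℝ) → Fin l → ℝ)
    (hc : ∀ γ j, c γ j = sInf (insert (1:ℝ) {a : ℝ | ∃ k', (γ k').1 = j ∧ (γ k').2 = a})) :
    ∑ p : Fin l → Fin 2, (-1 : ℝ) ^ (∑ j, ((p j : ℕ))) *
        (∑ j, (1 / (l:ℝ)) * (1 - 1 / (l:ℝ)) ^ ((p j : ℕ))) ^ k
      ≤ (π {γ | ∑ j, c γ j < 1}).toReal :=
  stmt_0_general l k μ hμ π hπ c hc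
end

section
/- Let l ≥ 1, let Ω be an arbitrary nonempty set, and let u : Ω → Δ_l be any function taking values in the unit simplex. Let (γ^k)_{k ∈ ℕ} with γ^k = (i^k, α^k) be an i.i.d. sequence, each term uniformly distributed on {1,...,l} × [0,1], and for each k define the set of unassigned points U^k_γ = {x ∈ Ω : u_{i^{k'}}(x) ≤ α^{k'} for all 1 ≤ k' ≤ k}. Then almost surely there exists k ∈ ℕ with U^k_γ = ∅; that is, the probabilistic rounding process assigns a label to every point of Ω after finitely many steps with probability 1. -/
/-!
For every `x`, some coordinate satisfies `u x i ≥ 1/l`, so `x` is assigned as soon as a draw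
`(i, α)` with `α < 1/l` occurs. Each of these `l` events has positive probability at every step,
so by independence and the second Borel–Cantelli lemma each of them occurs almost surely;
after the last of these `l` first occurrences, no point is left unassigned.
-/

open MeasureTheory ProbabilityTheory Filter Set

theorem Fintype.exists_inv_card_le_of_sum_eq_one {ι : Type*} [Fintype ι] [Nonempty ι]
    (v : ι → ℝ) (hv : ∑ i, v i = 1) : ∃ i, (Fintype.card ι : ℝ)⁻¹ ≤ v i := by
  obtain ⟨i, -, hi⟩ := Finset.exists_le_of_sum_le (f := fun _ ↦ (Fintype.card ι : ℝ)⁻¹)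
    (g := v) Finset.univ_nonempty (by simp [hv])
  exact ⟨i, hi⟩

theorem ProbabilityTheory.iIndepFun.ae_frequently_mem {Θ β : Type*} [MeasurableSpace Θ]
    [MeasurableSpace β] {P : Measure Θ} {X : ℕ → Θ → β} (hX : ∀ k, Measurable (X k))
    (hind : iIndepFun X P) {B : Set β} (hB : MeasurableSet B)
    (hsum : ∑' k, P (X k ⁻¹' B) = ⊤) : ∀ᵐ θ ∂P, ∃ᶠ k in atTop, X k θ ∈ B := by
  have : IsProbabilityMeasure P := hind.isProbabilityMeasure
  have hmeas : ∀ k, MeasurableSet (X k ⁻¹' B) := fun k ↦ hX k hB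
  have hsets : iIndepSet (fun k ↦ X k ⁻¹' B) P :=
    (iIndepSet_iff_meas_biInter hmeas).2 fun S ↦
      hind.measure_inter_preimage_eq_mul S fun k _ ↦ hB
  have hlimsup := measure_limsup_eq_one hmeas hsets hsum
  rw [← prob_compl_eq_zero_iff (MeasurableSet.measurableSet_limsup hmeas), ← mem_ae_iff]
    at hlimsup
  exact Filter.mem_of_superset hlimsup fun θ hθ ↦ Filter.mem_limsup_iff_frequently_mem.1 hθ

theorem uniform_prod_volume_Icc_singleton_prod_Iio_ne_zero {ι : Type*} [Fintype ι]
    [Nonempty ι] [MeasurableSpace ι] [MeasurableSingletonClass ι] (i : ι) {c : ℝ}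
    (hc : 0 < c) :
    (PMF.uniformOfFintype ι).toMeasure.prod (volume.restrict (Icc (0:ℝ) 1))
      ({i} ×ˢ Iio c) ≠ 0 := by
  rw [Measure.prod_prod, PMF.toMeasure_apply_singleton _ _ (measurableSet_singleton i),
    Measure.restrict_apply measurableSet_Iio]
  refine mul_ne_zero (by simp) (ne_of_gt ?_)
  calc 0 < volume (Ioo (0:ℝ) (min c 1)) := by simp [hc]
    _ ≤ volume (Iio c ∩ Icc 0 1) := measure_mono fun r ⟨h0, h1⟩ ↦
      ⟨h1.trans_le (min_le_left _ _), h0.le, (h1.trans_le (min_le_right _ _)).le⟩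

theorem exists_setOf_forall_le_eq_empty {Ω ι : Type*} [Fintype ι] [Nonempty ι]
    (u : Ω → ι → ℝ) (hu : ∀ x, ∑ i, u x i = 1) (g : ℕ → ι × ℝ)
    (hg : ∀ i, ∃ k, (g k).1 = i ∧ (g k).2 < (Fintype.card ι : ℝ)⁻¹) :
    ∃ n, {x | ∀ k < n, u x (g k).1 ≤ (g k).2} = ∅ := by
  choose k hk using hg
  refine ⟨Finset.univ.sup k + 1, eq_empty_of_forall_notMem fun x hx ↦ ?_⟩
  obtain ⟨i, hi⟩ := Fintype.exists_inv_card_le_of_sum_eq_one (u x) (hu x)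
  have hle := hx (k i) (Nat.lt_succ_of_le (Finset.le_sup (Finset.mem_univ i)))
  rw [(hk i).1] at hle
  linarith [(hk i).2]

theorem stmt_2_general (l : ℕ) [NeZero l]
    {Ω : Type*} (u : Ω → Fin l → ℝ)
    (hu : ∀ x, (∀ i, 0 ≤ u x i) ∧ ∑ i, u x i = 1)
    {Θ : Type*} [MeasurableSpace Θ] (P : Measure Θ) [IsProbabilityMeasure P]
    (γ : ℕ → Θ → Fin l × ℝ)
    (hmeas : ∀ k, Measurable (γ k))
    (hindep : ProbabilityTheory.iIndepFun γ P)
    (hdist : ∀ k, P.map (γ k) = (PMF.uniformOfFintype (Fin l)).toMeasure.prod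
      (volume.restrict (Set.Icc (0:ℝ) 1)))
    (U : Θ → ℕ → Set Ω)
    (hU : ∀ θ k, U θ k = {x : Ω | ∀ k' < k, u x ((γ k' θ).1) ≤ (γ k' θ).2}) :
    P {θ | ∃ k : ℕ, U θ k = ∅} = 1 := by
  set B : Fin l → Set (Fin l × ℝ) := fun i ↦ {i} ×ˢ Iio (Fintype.card (Fin l) : ℝ)⁻¹
  have hB : ∀ i, MeasurableSet (B i) := fun i ↦
    (measurableSet_singleton i).prod measurableSet_Iio
  have hhit : ∀ i, ∀ᵐ θ ∂P, ∃ k, γ k θ ∈ B i := fun i ↦ by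
    have hsum : ∑' k, P (γ k ⁻¹' B i) = ⊤ := by
      simp_rw [← Measure.map_apply (hmeas _) (hB i), hdist]
      exact ENNReal.tsum_const_eq_top_of_ne_zero
        (uniform_prod_volume_Icc_singleton_prod_Iio_ne_zero i (by positivity))
    exact (hindep.ae_frequently_mem hmeas (hB i) hsum).mono fun θ h ↦ h.exists
  have hempty : ∀ᵐ θ ∂P, ∃ k, U θ k = ∅ := by
    filter_upwards [ae_all_iff.2 hhit] with θ hθ
    simp_rw [hU]
    exact exists_setOf_forall_le_eq_empty u (fun x ↦ (hu x).2) (γ · θ) hθ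
  rw [measure_of_measure_compl_eq_zero (mem_ae_iff.1 hempty), measure_univ]

/-- Let `l ≥ 1`, `Ω` an arbitrary nonempty set, `u : Ω → Δ_l` any function into
the unit simplex, and `(γ^k)_{k∈ℕ}`, `γ^k = (i^k, α^k)`, an i.i.d. sequence, each term uniform
on `{1,…,l} × [0,1]` (modeled by independent random variables on a probability space `(Θ, P)`,
each with law the product of the uniform measure on `Fin l` and Lebesgue measure restricted to
`[0,1]`). With `U^k = {x ∈ Ω : u_{i^{k'}}(x) ≤ α^{k'} for all first k draws k'}`, almost surely
there exists `k` with `U^k = ∅`. -/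
theorem stmt_2 (l : ℕ) [NeZero l]
    {Ω : Type*} [Nonempty Ω] (u : Ω → Fin l → ℝ)
    (hu : ∀ x, (∀ i, 0 ≤ u x i) ∧ ∑ i, u x i = 1)
    {Θ : Type*} [MeasurableSpace Θ] (P : Measure Θ) [IsProbabilityMeasure P]
    (γ : ℕ → Θ → Fin l × ℝ)
    (hmeas : ∀ k, Measurable (γ k))
    (hindep : ProbabilityTheory.iIndepFun γ P)
    (hdist : ∀ k, P.map (γ k) = (PMF.uniformOfFintype (Fin l)).toMeasure.prod
      (volume.restrict (Set.Icc (0:ℝ) 1)))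
    (U : Θ → ℕ → Set Ω)
    (hU : ∀ θ k, U θ k = {x : Ω | ∀ k' < k, u x ((γ k' θ).1) ≤ (γ k' θ).2}) :
    P {θ | ∃ k : ℕ, U θ k = ∅} = 1 :=
  stmt_2_general l u hu P γ hmeas hindep hdist U hU
end

section
/- Let l ≥ 1, let Ω = (0,1)^m ⊆ ℝ^m, let u : Ω → Δ_l be measurable, and let s ∈ L^1(Ω)^l. For a finite sequence γ = (γ^1, ..., γ^k) with γ^{k'} = (i^{k'}, α^{k'}) ∈ {1,...,l} × [0,1], define recursively u^0_γ = u and u^{k'}_γ(x) = e^{i^{k'}} if u^{k'−1}_{γ, i^{k'}}(x) > α^{k'}, and u^{k'}_γ(x) = u^{k'−1}_γ(x) otherwise. Then for every k ≥ 0, the expectation of the data term over γ drawn from the k-fold product of the uniform measure on {1,...,l} × [0,1] is invariant under the rounding process: E_γ [∫_Ω ⟨u^k_γ(x), s(x)⟩ dx] = ∫_Ω ⟨u(x), s(x)⟩ dx. -/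
/-!
One rounding step is unbiased: for `v` in the simplex, averaging `roundStep v (i, α)` over a
uniform label `i` and a uniform threshold `α ∈ [0, 1]` gives
`(1 / l) ∑ᵢ (vᵢ eⁱ + (1 - vᵢ) v) = v`. Since every step maps the simplex to itself, peeling off
the last step with Fubini shows by induction that `E_γ u^k_γ(x) = u(x)` for every `x`. The data
term of a simplex-valued field is dominated by `∑ⱼ |sⱼ|`, so Fubini also exchanges `E_γ` with
`∫_Ω`, and linearity of `w ↦ ⟨w, s(x)⟩` finishes the proof.
-/

open MeasureTheory

section Steps

variable {P E : Type*}

def applySteps (f : E → P → E) {k : ℕ} (γ : Fin k → P) (v : E) : E :=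
  Fin.foldl k (fun w i => f w (γ i)) v

variable {f : E → P → E}

theorem applySteps_succ {k : ℕ} (γ : Fin (k + 1) → P) (v : E) :
    applySteps f γ v = f (applySteps f (Fin.init γ) v) (γ (Fin.last k)) :=
  Fin.foldl_succ_last _ v

theorem applySteps_mem {S : Set E} (hfS : ∀ v ∈ S, ∀ p, f v p ∈ S) :
    ∀ {k : ℕ} (γ : Fin k → P) {v : E}, v ∈ S → applySteps f γ v ∈ S
  | 0, _, _, hv => hv
  | k + 1, γ, _, hv => by
    rw [applySteps_succ]
    exact hfS _ (applySteps_mem hfS (Fin.init γ) hv) _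

theorem eq_applySteps_of_succ {k : ℕ} {U : ℕ → E} {γ : Fin k → P} {v : E} (h0 : U 0 = v)
    (hsucc : ∀ n : Fin k, U (n + 1) = f (U n) (γ n)) : U k = applySteps f γ v := by
  suffices ∀ n (hn : n ≤ k), U n = Fin.foldl n (fun w i => f w (γ (Fin.castLE hn i))) v from
    this k le_rfl
  intro n hn
  induction n with
  | zero => exact h0
  | succ n ih =>
    rw [Fin.foldl_succ_last]
    exact (hsucc ⟨n, hn⟩).trans (congrArg (f · _) (ih (Nat.le_of_succ_le hn)))

variable [MeasurableSpace P] [MeasurableSpace E]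

theorem measurable_applySteps (hf : Measurable (Function.uncurry f)) :
    ∀ k : ℕ, Measurable fun q : (Fin k → P) × E => applySteps f q.1 q.2
  | 0 => measurable_snd
  | k + 1 => by
    simp only [applySteps_succ]
    have hinit : Measurable fun γ : Fin (k + 1) → P => Fin.init γ :=
      measurable_pi_lambda _ fun i => measurable_pi_apply _
    exact hf.comp (((measurable_applySteps hf k).comp ((hinit.comp measurable_fst).prodMk
      measurable_snd)).prodMk ((measurable_pi_apply _).comp measurable_fst))

variable [NormedAddCommGroup E] [NormedSpace ℝ E] [CompleteSpace E] [BorelSpace E]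
  [SecondCountableTopology E]

theorem integral_applySteps {ν : Measure P} [IsProbabilityMeasure ν] {S : Set E}
    (hS : Bornology.IsBounded S) (hf : Measurable (Function.uncurry f))
    (hfS : ∀ v ∈ S, ∀ p, f v p ∈ S) (hmean : ∀ v ∈ S, ∫ p, f v p ∂ν = v) :
    ∀ (k : ℕ) {v : E}, v ∈ S → ∫ γ, applySteps f γ v ∂(Measure.pi fun _ : Fin k => ν) = v
  | 0, v, _ => by simp [applySteps]
  | k + 1, v, hv => by
    obtain ⟨C, hC⟩ := hS.exists_norm_le
    -- `hsplit` sends `γ` to `(γ (Fin.last k), Fin.init γ)`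
    have hsplit := measurePreserving_piFinSuccAbove (fun _ : Fin (k + 1) => ν) (Fin.last k)
    have hint : Integrable (fun q : P × (Fin k → P) => f (applySteps f q.2 v) q.1)
        (ν.prod (Measure.pi fun _ => ν)) := by
      refine Integrable.of_bound ?_ C
        (ae_of_all _ fun q => hC _ (hfS _ (applySteps_mem hfS _ hv) _))
      exact (hf.comp (((measurable_applySteps hf k).comp
        (measurable_snd.prodMk measurable_const)).prodMk measurable_fst)).aestronglyMeasurable
    calc ∫ γ, applySteps f γ v ∂(Measure.pi fun _ => ν)
        = ∫ q : P × (Fin k → P), f (applySteps f q.2 v) q.1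
            ∂(ν.prod (Measure.pi fun _ => ν)) := by
          rw [← hsplit.integral_comp']
          simp [applySteps_succ]
      _ = ∫ γ, ∫ p, f (applySteps f γ v) p ∂ν ∂(Measure.pi fun _ => ν) :=
          integral_prod_symm _ hint
      _ = ∫ γ, applySteps f γ v ∂(Measure.pi fun _ => ν) :=
          integral_congr_ae (ae_of_all _ fun γ => hmean _ (applySteps_mem hfS γ hv))
      _ = v := integral_applySteps hS hf hfS hmean k hv

end Steps

instance isProbabilityMeasure_volume_restrict_Icc_zero_one :
    IsProbabilityMeasure (volume.restrict (Set.Icc (0 : ℝ) 1)) :=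
  ⟨by simp⟩

theorem setIntegral_Icc_zero_one_ite_lt {E : Type*} [NormedAddCommGroup E] [NormedSpace ℝ E]
    [CompleteSpace E] {a : ℝ} (ha : a ∈ Set.Icc (0 : ℝ) 1) (w v : E) :
    ∫ α in Set.Icc (0 : ℝ) 1, (if α < a then w else v) = a • w + (1 - a) • v := by
  have hind : (fun α : ℝ => if α < a then w else v)
      = fun α => (Set.Iio a).indicator (fun _ => w - v) α + v := by
    funext α
    by_cases h : α < a <;> simp [h]
  have hmeas : (volume.restrict (Set.Icc (0 : ℝ) 1)).real (Set.Iio a) = a := by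
    rw [measureReal_restrict_apply measurableSet_Iio,
      show Set.Iio a ∩ Set.Icc 0 1 = Set.Ico 0 a by grind]
    simp [ha.1]
  rw [hind,
    integral_add ((integrable_const _).indicator measurableSet_Iio) (integrable_const _),
    integral_indicator_const _ measurableSet_Iio, integral_const, hmeas, probReal_univ, one_smul,
    smul_sub, sub_smul, one_smul]
  abel

section Rounding

variable {ι : Type*} [Fintype ι]

theorem norm_le_one_of_mem_stdSimplex {v : ι → ℝ} (hv : v ∈ stdSimplex ℝ ι) : ‖v‖ ≤ 1 :=
  (pi_norm_le_iff_of_nonneg zero_le_one).2 fun i => by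
    rw [Real.norm_of_nonneg (hv.1 i)]
    exact (mem_Icc_of_mem_stdSimplex hv i).2

theorem norm_sum_mul_le_of_mem_stdSimplex {w : ι → ℝ} (hw : w ∈ stdSimplex ℝ ι) (c : ι → ℝ) :
    ‖∑ j, w j * c j‖ ≤ ∑ j, |c j| :=
  (norm_sum_le _ _).trans <| Finset.sum_le_sum fun j _ => by
    rw [norm_mul, Real.norm_of_nonneg (hw.1 j), Real.norm_eq_abs]
    exact mul_le_of_le_one_left (abs_nonneg _) (mem_Icc_of_mem_stdSimplex hw j).2

theorem integrable_prod_sum_mul_of_mem_stdSimplex {X Y : Type*} [MeasurableSpace X]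
    [MeasurableSpace Y] {μ : Measure X} [IsFiniteMeasure μ] {ν : Measure Y} [SFinite ν]
    {W : X → Y → ι → ℝ} (hW : Measurable (Function.uncurry W))
    (hWS : ∀ᵐ y ∂ν, ∀ x, W x y ∈ stdSimplex ℝ ι) {c : Y → ι → ℝ}
    (hc : ∀ j, Integrable (c · j) ν) :
    Integrable (Function.uncurry fun x y => ∑ j, W x y j * c y j) (μ.prod ν) := by
  refine Integrable.mono' (g := fun p => ∑ j, |c p.2 j|)
    (integrable_finsetSum _ fun j _ => (hc j).abs.comp_snd μ) ?_ ?_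
  · exact Finset.aestronglyMeasurable_fun_sum _ fun j _ =>
      ((measurable_pi_apply j).comp hW).aestronglyMeasurable.mul
        ((hc j).comp_snd μ).aestronglyMeasurable
  · exact (Measure.quasiMeasurePreserving_snd.ae hWS).mono fun p hp =>
      norm_sum_mul_le_of_mem_stdSimplex (hp p.1) _

theorem integral_sum_apply_mul {X : Type*} [MeasurableSpace X] {μ : Measure X}
    {F : X → ι → ℝ} (hF : Integrable F μ) (c : ι → ℝ) :
    ∫ x, ∑ j, F x j * c j ∂μ = ∑ j, (∫ x, F x ∂μ) j * c j := by
  rw [integral_finsetSum _ fun j _ => (hF.eval j).mul_const _]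
  simp_rw [integral_mul_const, eval_integral hF.eval]

variable [DecidableEq ι]

noncomputable def roundStep (v : ι → ℝ) (p : ι × ℝ) : ι → ℝ :=
  if p.2 < v p.1 then Pi.single p.1 1 else v

theorem roundStep_mem_stdSimplex {v : ι → ℝ} (hv : v ∈ stdSimplex ℝ ι) (p : ι × ℝ) :
    roundStep v p ∈ stdSimplex ℝ ι := by
  unfold roundStep
  split_ifs
  exacts [single_mem_stdSimplex ℝ p.1, hv]

theorem applySteps_roundStep_mem_stdSimplex {k : ℕ} (γ : Fin k → ι × ℝ) {v : ι → ℝ}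
    (hv : v ∈ stdSimplex ℝ ι) : applySteps roundStep γ v ∈ stdSimplex ℝ ι :=
  applySteps_mem (fun _ hw => roundStep_mem_stdSimplex hw) γ hv

variable [MeasurableSpace ι] [MeasurableSingletonClass ι]

theorem measurable_roundStep : Measurable (Function.uncurry (roundStep (ι := ι))) := by
  have heval : Measurable fun x : (ι → ℝ) × ι => x.1 x.2 :=
    measurable_from_prod_countable_left fun i => measurable_pi_apply i
  have hlt : MeasurableSet {q : (ι → ℝ) × (ι × ℝ) | q.2.2 < q.1 q.2.1} :=
    measurableSet_lt (measurable_snd.comp measurable_snd)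
      (heval.comp (measurable_fst.prodMk (measurable_fst.comp measurable_snd)))
  have hsingle : Measurable fun i : ι => (Pi.single i 1 : ι → ℝ) := measurable_of_countable _
  exact Measurable.ite hlt (hsingle.comp (measurable_fst.comp measurable_snd)) measurable_fst

theorem integral_roundStep [Nonempty ι] {v : ι → ℝ} (hv : v ∈ stdSimplex ℝ ι) :
    ∫ p, roundStep v p
      ∂(PMF.uniformOfFintype ι).toMeasure.prod (volume.restrict (Set.Icc (0 : ℝ) 1)) = v := by
  have hint : Integrable (roundStep v)
      ((PMF.uniformOfFintype ι).toMeasure.prod (volume.restrict (Set.Icc (0 : ℝ) 1))) :=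
    Integrable.of_bound (measurable_roundStep.comp measurable_prodMk_left).aestronglyMeasurable
      1 (ae_of_all _ fun p => norm_le_one_of_mem_stdSimplex (roundStep_mem_stdSimplex hv p))
  rw [integral_prod _ hint, PMF.integral_eq_sum]
  simp only [roundStep]
  simp_rw [setIntegral_Icc_zero_one_ite_lt (mem_Icc_of_mem_stdSimplex hv _)]
  have hsum : ∑ i, (v i • Pi.single i 1 + (1 - v i) • v) = (Fintype.card ι : ℝ) • v := by
    have hsingle : ∑ i, v i • (Pi.single i 1 : ι → ℝ) = v := by
      simpa [← Pi.single_smul'] using Finset.univ_sum_single v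
    rw [Finset.sum_add_distrib, ← Finset.sum_smul, Finset.sum_sub_distrib, hv.2, hsingle]
    simp only [Finset.sum_const, Finset.card_univ, nsmul_eq_mul, mul_one, sub_smul, one_smul]
    abel
  have hcard : (Fintype.card ι : ℝ) ≠ 0 := Nat.cast_ne_zero.2 Fintype.card_ne_zero
  simp only [PMF.uniformOfFintype_apply, ENNReal.toReal_inv, ENNReal.toReal_natCast]
  rw [← Finset.smul_sum, hsum, smul_smul, inv_mul_cancel₀ hcard, one_smul]

theorem integral_applySteps_roundStep [Nonempty ι] (k : ℕ) {v : ι → ℝ}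
    (hv : v ∈ stdSimplex ℝ ι) :
    ∫ γ, applySteps roundStep γ v ∂(Measure.pi fun _ : Fin k =>
      (PMF.uniformOfFintype ι).toMeasure.prod (volume.restrict (Set.Icc (0 : ℝ) 1))) = v :=
  integral_applySteps (isCompact_stdSimplex ℝ ι).isBounded measurable_roundStep
    (fun _ hw => roundStep_mem_stdSimplex hw) (fun _ hw => integral_roundStep hw) k hv

end Rounding

theorem stmt_8_general (m l k : ℕ) [NeZero l]
    (Ω : Set (Fin m → ℝ)) (hΩ : Ω = Set.pi Set.univ fun _ : Fin m => Set.Ioo (0:ℝ) 1)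
    (u : (Fin m → ℝ) → Fin l → ℝ) (hu : Measurable u)
    (huΔ : ∀ x ∈ Ω, (∀ i, 0 ≤ u x i) ∧ ∑ i, u x i = 1)
    (s : (Fin m → ℝ) → Fin l → ℝ)
    (hs : ∀ j, IntegrableOn (fun x => s x j) Ω volume)
    (π : Measure (Fin k → Fin l × ℝ))
    (hπ : π = Measure.pi fun _ => (PMF.uniformOfFintype (Fin l)).toMeasure.prod
      (volume.restrict (Set.Icc (0:ℝ) 1)))
    (U : (Fin k → Fin l × ℝ) → ℕ → (Fin m → ℝ) → Fin l → ℝ)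
    (hU0 : ∀ γ, U γ 0 = u)
    (hUstep : ∀ γ, ∀ n : Fin k, ∀ x,
      ((γ n).2 < U γ n x (γ n).1 → U γ ((n : ℕ) + 1) x = Pi.single (γ n).1 1) ∧
      (¬ (γ n).2 < U γ n x (γ n).1 → U γ ((n : ℕ) + 1) x = U γ n x)) :
    ∫ γ, (∫ x in Ω, ∑ j, U γ k x j * s x j ∂volume) ∂π
      = ∫ x in Ω, ∑ j, u x j * s x j ∂volume := by
  subst hπ
  have hΩm : MeasurableSet Ω := hΩ ▸ MeasurableSet.univ_pi fun _ => measurableSet_Ioo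
  have hUk : ∀ γ x, U γ k x = applySteps roundStep γ (u x) := fun γ x =>
    eq_applySteps_of_succ (U := fun n => U γ n x) (congrFun (hU0 γ) x) fun n => by
      unfold roundStep
      split_ifs with h
      exacts [(hUstep γ n x).1 h, (hUstep γ n x).2 h]
  have hmeas : Measurable fun q : (Fin k → Fin l × ℝ) × (Fin l → ℝ) =>
      applySteps roundStep q.1 q.2 :=
    measurable_applySteps measurable_roundStep k
  have hsimplex : ∀ᵐ x ∂volume.restrict Ω, ∀ γ : Fin k → Fin l × ℝ,
      applySteps roundStep γ (u x) ∈ stdSimplex ℝ (Fin l) :=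
    (ae_restrict_mem hΩm).mono fun x hx γ => applySteps_roundStep_mem_stdSimplex γ (huΔ x hx)
  simp_rw [hUk]
  rw [integral_integral_swap (integrable_prod_sum_mul_of_mem_stdSimplex
    (W := fun γ x => applySteps roundStep γ (u x))
    (hmeas.comp (measurable_fst.prodMk (hu.comp measurable_snd))) hsimplex hs)]
  refine setIntegral_congr_fun hΩm fun x hx => ?_
  have hint : Integrable (fun γ => applySteps roundStep γ (u x)) (Measure.pi fun _ =>
      (PMF.uniformOfFintype (Fin l)).toMeasure.prod (volume.restrict (Set.Icc (0:ℝ) 1))) :=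
    Integrable.of_bound (hmeas.comp (measurable_id.prodMk measurable_const)).aestronglyMeasurable 1
      (ae_of_all _ fun γ => norm_le_one_of_mem_stdSimplex
        (applySteps_roundStep_mem_stdSimplex γ (huΔ x hx)))
  rw [integral_sum_apply_mul hint, integral_applySteps_roundStep k (huΔ x hx)]

/-- Let `Ω = (0,1)^m`, `u : Ω → Δ_l` measurable, `s ∈ L¹(Ω)^l`. For a finite
sequence `γ = (γ^1, …, γ^k)` of (label, threshold) pairs let `u^k_γ` be the rounding recursion
`u^0_γ = u`, `u^{k'}_γ(x) = e^{i^{k'}}` if `u^{k'-1}_{γ,i^{k'}}(x) > α^{k'}` and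
`u^{k'}_γ(x) = u^{k'-1}_γ(x)` otherwise. Then the expected data term over `γ` drawn from the
`k`-fold product of the uniform measure on `{1,…,l} × [0,1]` equals the data term of `u`:
`E_γ ∫_Ω ⟨u^k_γ, s⟩ = ∫_Ω ⟨u, s⟩`. -/
theorem stmt_8 (m l k : ℕ) (hm : 1 ≤ m) [NeZero l]
    (Ω : Set (Fin m → ℝ)) (hΩ : Ω = Set.pi Set.univ fun _ : Fin m => Set.Ioo (0:ℝ) 1)
    (u : (Fin m → ℝ) → Fin l → ℝ) (hu : Measurable u)
    (huΔ : ∀ x ∈ Ω, (∀ i, 0 ≤ u x i) ∧ ∑ i, u x i = 1)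
    (s : (Fin m → ℝ) → Fin l → ℝ)
    (hs : ∀ j, IntegrableOn (fun x => s x j) Ω volume)
    (π : Measure (Fin k → Fin l × ℝ))
    (hπ : π = Measure.pi fun _ => (PMF.uniformOfFintype (Fin l)).toMeasure.prod
      (volume.restrict (Set.Icc (0:ℝ) 1)))
    (U : (Fin k → Fin l × ℝ) → ℕ → (Fin m → ℝ) → Fin l → ℝ)
    (hU0 : ∀ γ, U γ 0 = u)
    (hUstep : ∀ γ, ∀ n : Fin k, ∀ x,
      ((γ n).2 < U γ n x (γ n).1 → U γ ((n : ℕ) + 1) x = Pi.single (γ n).1 1) ∧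
      (¬ (γ n).2 < U γ n x (γ n).1 → U γ ((n : ℕ) + 1) x = U γ n x)) :
    ∫ γ, (∫ x in Ω, ∑ j, U γ k x j * s x j ∂volume) ∂π
      = ∫ x in Ω, ∑ j, u x j * s x j ∂volume :=
  stmt_8_general m l k Ω hΩ u hu huΔ s hs π hπ U hU0 hUstep
end

section
/- Let l ≥ 2, m ≥ 1, and let d be a metric on {1,...,l}. Then for every ν ∈ ℝ^m with ‖ν‖₂ = 1 and all i, j ∈ {1,...,l}, Ψ_d(ν (e^i − e^j)ᵀ) = d(i,j). In particular, Ψ_d satisfies the upper-boundedness condition with λ_u = max_{i,j ∈ {1,...,l}} d(i,j). -/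
/-- The local constraint set `D_loc^d` for a metric `d` on the labels:
matrices `v ∈ ℝ^{m×l}` with `‖v^i − v^j‖₂ ≤ d(i,j)` for all `i,j` and columns summing to 0. -/
def Dloc (m l : ℕ) (d : Fin l → Fin l → ℝ) : Set (Matrix (Fin m) (Fin l) ℝ) :=
  {v | (∀ i j, Real.sqrt (∑ a, (v a i - v a j) ^ 2) ≤ d i j) ∧ ∀ a, ∑ i, v a i = 0}

/-- `Ψ_d(z) = sup_{v ∈ D_loc^d} ⟨z, v⟩` (Frobenius inner product). -/
noncomputable def Psid (m l : ℕ) (d : Fin l → Fin l → ℝ)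
    (z : Matrix (Fin m) (Fin l) ℝ) : ℝ :=
  sSup ((fun v : Matrix (Fin m) (Fin l) ℝ => ∑ a, ∑ i, z a i * v a i) '' Dloc m l d)

/-!
For `v ∈ D_loc^d` and a unit vector `ν`, the pairing `⟨ν (e^i − e^j)ᵀ, v⟩ = ⟨ν, v^i − v^j⟩` is at
most `‖v^i − v^j‖₂ ≤ d(i,j)` by Cauchy–Schwarz. The bound is attained by the rank-one matrix
`ν cᵀ` with `c_k = d(j,k) − (1/l) ∑_r d(j,r)`: the triangle inequality makes `k ↦ d(j,k)`
1-Lipschitz for `d`, and subtracting the mean makes the columns sum to zero.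
-/

open Finset Matrix

lemma sum_sum_vecMulVec_single_sub_mul {ι κ : Type*} [Fintype ι] [Fintype κ] [DecidableEq κ]
    (ν : ι → ℝ) (i j : κ) (v : Matrix ι κ ℝ) :
    ∑ a, ∑ b, vecMulVec ν (Pi.single i 1 - Pi.single j 1) a b * v a b =
      ∑ a, ν a * (v a i - v a j) := by
  refine sum_congr rfl fun a _ => ?_
  simp [vecMulVec_apply, Pi.single_apply, sub_mul, mul_sub, sum_sub_distrib]

section

variable {m l : ℕ} {d : Fin l → Fin l → ℝ} {ν : Fin m → ℝ}

lemma sum_mul_sub_le_of_mem_Dloc (hν : √(∑ a, ν a ^ 2) = 1) {v : Matrix (Fin m) (Fin l) ℝ}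
    (hv : v ∈ Dloc m l d) (i j : Fin l) :
    ∑ a, ν a * (v a i - v a j) ≤ d i j :=
  calc ∑ a, ν a * (v a i - v a j)
      ≤ √(∑ a, ν a ^ 2) * √(∑ a, (v a i - v a j) ^ 2) := Real.sum_mul_le_sqrt_mul_sqrt _ _ _
    _ ≤ d i j := by rw [hν, one_mul]; exact hv.1 i j

lemma vecMulVec_mem_Dloc {c : Fin l → ℝ} (hν : √(∑ a, ν a ^ 2) = 1)
    (hc : ∀ p q, |c p - c q| ≤ d p q) (hc0 : ∑ k, c k = 0) :
    vecMulVec ν c ∈ Dloc m l d := by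
  refine ⟨fun p q => ?_, fun a => ?_⟩
  · have hsq : ∑ a, (vecMulVec ν c a p - vecMulVec ν c a q) ^ 2 =
        (c p - c q) ^ 2 * ∑ a, ν a ^ 2 := by
      rw [mul_sum]
      exact sum_congr rfl fun a _ => by simp only [vecMulVec_apply]; ring
    rw [hsq, Real.sqrt_mul (sq_nonneg _), hν, mul_one, Real.sqrt_sq_eq_abs]
    exact hc p q
  · simp only [vecMulVec_apply, ← mul_sum, hc0, mul_zero]

noncomputable def centeredDist (d : Fin l → Fin l → ℝ) (j k : Fin l) : ℝ :=
  d j k - (∑ r, d j r) / l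

lemma sum_centeredDist (d : Fin l → Fin l → ℝ) (j : Fin l) : ∑ k, centeredDist d j k = 0 := by
  have hl : (l : ℝ) ≠ 0 := Nat.cast_ne_zero.mpr j.pos.ne'
  simp only [centeredDist, sum_sub_distrib, sum_const, card_univ, Fintype.card_fin, nsmul_eq_mul]
  field_simp
  ring

lemma abs_centeredDist_sub_le (hsymm : ∀ i j, d i j = d j i)
    (htri : ∀ i j r, d i r ≤ d i j + d j r) (j p q : Fin l) :
    |centeredDist d j p - centeredDist d j q| ≤ d p q := by
  have hp := htri j q p
  have hq := htri j p q
  rw [hsymm q p] at hp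
  rw [abs_sub_le_iff, centeredDist, centeredDist]
  constructor <;> linarith

theorem Psid_vecMulVec_single_sub (hd0 : ∀ i, d i i = 0) (hsymm : ∀ i j, d i j = d j i)
    (htri : ∀ i j r, d i r ≤ d i j + d j r) (hν : √(∑ a, ν a ^ 2) = 1) (i j : Fin l) :
    Psid m l d (vecMulVec ν (Pi.single i 1 - Pi.single j 1)) = d i j := by
  refine IsGreatest.csSup_eq ⟨⟨vecMulVec ν (centeredDist d j),
    vecMulVec_mem_Dloc hν (abs_centeredDist_sub_le hsymm htri j) (sum_centeredDist d j), ?_⟩, ?_⟩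
  · have hν' : ∑ a, ν a ^ 2 = 1 := Real.sqrt_eq_one.mp hν
    have hpair : ∑ a, ν a * (vecMulVec ν (centeredDist d j) a i -
        vecMulVec ν (centeredDist d j) a j) =
        (centeredDist d j i - centeredDist d j j) * ∑ a, ν a ^ 2 := by
      rw [mul_sum]
      exact sum_congr rfl fun a _ => by simp only [vecMulVec_apply]; ring
    simp only [sum_sum_vecMulVec_single_sub_mul, hpair, hν', mul_one, centeredDist, hd0, hsymm j i]
    ring
  · rintro _ ⟨v, hv, rfl⟩
    exact (sum_sum_vecMulVec_single_sub_mul ν i j v).trans_le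
      (sum_mul_sub_le_of_mem_Dloc hν hv i j)

end

theorem stmt_9_general (m l : ℕ)
    (d : Fin l → Fin l → ℝ)
    (hd0 : ∀ i, d i i = 0)
    (hdsymm : ∀ i j, d i j = d j i)
    (hdtri : ∀ i j r, d i r ≤ d i j + d j r) :
    (∀ ν : Fin m → ℝ, Real.sqrt (∑ a, ν a ^ 2) = 1 →
      ∀ i j : Fin l,
        Psid m l d (Matrix.vecMulVec ν (Pi.single i 1 - Pi.single j 1)) = d i j) ∧
    (∀ lamu : ℝ, IsGreatest {x : ℝ | ∃ i j : Fin l, x = d i j} lamu →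
      ∀ ν : Fin m → ℝ, Real.sqrt (∑ a, ν a ^ 2) = 1 →
      ∀ i j : Fin l,
        Psid m l d (Matrix.vecMulVec ν (Pi.single i 1 - Pi.single j 1)) ≤ lamu) := by
  have hPsid := fun (ν : Fin m → ℝ) hν i j =>
    Psid_vecMulVec_single_sub (ν := ν) hd0 hdsymm hdtri hν i j
  refine ⟨hPsid, fun lamu hlamu ν hν i j => ?_⟩
  rw [hPsid ν hν i j]
  exact hlamu.2 ⟨i, j, rfl⟩

/-- For a metric `d` on `{1,…,l}` (`l ≥ 2`, `m ≥ 1`),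
`Ψ_d(ν (e^i − e^j)ᵀ) = d(i,j)` for every unit vector `ν ∈ ℝ^m` and all `i, j`; in particular
`Ψ_d` satisfies the upper-boundedness condition with `λ_u = max_{i,j} d(i,j)`. -/
theorem stmt_9 (m l : ℕ) (hm : 1 ≤ m) (hl : 2 ≤ l)
    (d : Fin l → Fin l → ℝ)
    (hd0 : ∀ i, d i i = 0)
    (hdsymm : ∀ i j, d i j = d j i)
    (hdpos : ∀ i j, i ≠ j → 0 < d i j)
    (hdtri : ∀ i j r, d i r ≤ d i j + d j r) :
    (∀ ν : Fin m → ℝ, Real.sqrt (∑ a, ν a ^ 2) = 1 →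
      ∀ i j : Fin l,
        Psid m l d (Matrix.vecMulVec ν (Pi.single i 1 - Pi.single j 1)) = d i j) ∧
    (∀ lamu : ℝ, IsGreatest {x : ℝ | ∃ i j : Fin l, x = d i j} lamu →
      ∀ ν : Fin m → ℝ, Real.sqrt (∑ a, ν a ^ 2) = 1 →
      ∀ i j : Fin l,
        Psid m l d (Matrix.vecMulVec ν (Pi.single i 1 - Pi.single j 1)) ≤ lamu) :=
  stmt_9_general m l d hd0 hdsymm hdtri
end

section
/- Let l ≥ 2, m ≥ 1, and let d be a metric on {1,...,l}. Set c = min_{i ≠ j} d(i,j). Then the function Ψ_d satisfies the lower-boundedness condition with λ_l = c: for every w = (w^1|...|w^l) ∈ ℝ^{m×l} with ∑_{i=1}^l w^i = 0, one has Ψ_d(w) ≥ (c/2) ∑_{i=1}^l ‖w^i‖₂. -/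
/-!
Normalise each column of `w` to length `c/2`, `u^i = (c/2) w^i / ‖w^i‖`, so that
`⟨w^i, u^i⟩ = (c/2) ‖w^i‖` and `‖u^i - u^j‖ ≤ c ≤ d(i,j)`. Subtracting the mean column makes the
columns sum to zero without changing the differences `u^i - u^j`, nor the pairing with `w`, whose
columns already sum to zero. The centred matrix therefore lies in `D_loc^d` and witnesses the bound
on the supremum, which is finite because `l ‖v^i‖ ≤ ∑_j ‖v^i - v^j‖ ≤ ∑_j d(i,j)` on `D_loc^d`.
-/
open Finset RealInnerProductSpace

section InnerProductSpace

variable {ι E : Type*} [Fintype ι] [NormedAddCommGroup E] [InnerProductSpace ℝ E]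

lemma real_inner_smul_inv_norm_self (r : ℝ) (w : E) : ⟪w, (r * ‖w‖⁻¹) • w⟫ = r * ‖w‖ := by
  rcases eq_or_ne w 0 with rfl | hw
  · simp
  · have : ‖w‖ ≠ 0 := norm_ne_zero_iff.mpr hw
    rw [real_inner_smul_right, real_inner_self_eq_norm_sq]
    field_simp

lemma norm_smul_inv_norm_le {r : ℝ} (hr : 0 ≤ r) (w : E) : ‖(r * ‖w‖⁻¹) • w‖ ≤ r := by
  rcases eq_or_ne w 0 with rfl | hw
  · simpa using hr
  · exact (norm_smul_inv_norm' (𝕜 := ℝ) hr hw).le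

noncomputable def subMean (u : ι → E) (i : ι) : E := u i - (Fintype.card ι : ℝ)⁻¹ • ∑ j, u j

lemma sum_subMean (u : ι → E) : ∑ i, subMean u i = 0 := by
  rcases isEmpty_or_nonempty ι with hι | hι
  · simp
  · have : (Fintype.card ι : ℝ) ≠ 0 := by positivity
    simp [subMean, sum_sub_distrib, ← Nat.cast_smul_eq_nsmul ℝ, smul_smul, this]

lemma subMean_sub_subMean (u : ι → E) (i j : ι) : subMean u i - subMean u j = u i - u j := by
  simp [subMean]

lemma sum_inner_subMean {w : ι → E} (hw : ∑ i, w i = 0) (u : ι → E) :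
    ∑ i, ⟪w i, subMean u i⟫ = ∑ i, ⟪w i, u i⟫ := by
  simp [subMean, inner_sub_right, sum_sub_distrib, ← sum_inner, hw]

lemma exists_sum_eq_zero_norm_sub_le_inner_eq {w : ι → E} (hw : ∑ i, w i = 0) {r : ℝ}
    (hr : 0 ≤ r) :
    ∃ v : ι → E, ∑ i, v i = 0 ∧ (∀ i j, ‖v i - v j‖ ≤ 2 * r) ∧
      ∑ i, ⟪w i, v i⟫ = r * ∑ i, ‖w i‖ := by
  set u : ι → E := fun i => (r * ‖w i‖⁻¹) • w i
  refine ⟨subMean u, sum_subMean u, fun i j => ?_, ?_⟩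
  · calc ‖subMean u i - subMean u j‖ = ‖u i - u j‖ := by rw [subMean_sub_subMean]
      _ ≤ ‖u i‖ + ‖u j‖ := norm_sub_le _ _
      _ ≤ r + r := add_le_add (norm_smul_inv_norm_le hr _) (norm_smul_inv_norm_le hr _)
      _ = 2 * r := by ring
  · simp only [sum_inner_subMean hw, u, real_inner_smul_inv_norm_self, mul_sum]

lemma card_mul_norm_le_sum_norm_sub {v : ι → E} (hv : ∑ i, v i = 0) (i : ι) :
    Fintype.card ι * ‖v i‖ ≤ ∑ j, ‖v i - v j‖ := by
  have : (Fintype.card ι : ℝ) • v i = ∑ j, (v i - v j) := by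
    simp [sum_sub_distrib, hv, Nat.cast_smul_eq_nsmul]
  calc (Fintype.card ι : ℝ) * ‖v i‖ = ‖∑ j, (v i - v j)‖ := by
        rw [← this, norm_smul, Real.norm_natCast]
    _ ≤ ∑ j, ‖v i - v j‖ := norm_sum_le _ _

end InnerProductSpace

section Columns

variable {m : ℕ} {ι : Type*}

def columnVec (v : Matrix (Fin m) ι ℝ) (i : ι) : EuclideanSpace ℝ (Fin m) :=
  WithLp.toLp 2 fun a => v a i

def ofColumns (v : ι → EuclideanSpace ℝ (Fin m)) : Matrix (Fin m) ι ℝ :=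
  Matrix.of fun a i => v i a

@[simp]
lemma columnVec_apply (v : Matrix (Fin m) ι ℝ) (i : ι) (a : Fin m) : columnVec v i a = v a i :=
  rfl

@[simp]
lemma columnVec_ofColumns (v : ι → EuclideanSpace ℝ (Fin m)) : columnVec (ofColumns v) = v :=
  rfl

lemma norm_columnVec (v : Matrix (Fin m) ι ℝ) (i : ι) :
    ‖columnVec v i‖ = √(∑ a, v a i ^ 2) := by
  simp [EuclideanSpace.norm_eq]

lemma norm_columnVec_sub (v : Matrix (Fin m) ι ℝ) (i j : ι) :
    ‖columnVec v i - columnVec v j‖ = √(∑ a, (v a i - v a j) ^ 2) := by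
  simp [EuclideanSpace.norm_eq]

lemma sum_columnVec_eq_zero_iff [Fintype ι] (v : Matrix (Fin m) ι ℝ) :
    ∑ i, columnVec v i = 0 ↔ ∀ a, ∑ i, v a i = 0 := by
  rw [← WithLp.ofLp_eq_zero, WithLp.ofLp_sum, funext_iff]
  simp [Finset.sum_apply]

lemma sum_sum_mul_eq_sum_inner [Fintype ι] (z v : Matrix (Fin m) ι ℝ) :
    ∑ a, ∑ i, z a i * v a i = ∑ i, ⟪columnVec z i, columnVec v i⟫ := by
  simp [PiLp.inner_apply, Finset.sum_comm (γ := Fin m), mul_comm]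

end Columns

lemma mem_Dloc_iff {m l : ℕ} {d : Fin l → Fin l → ℝ} {v : Matrix (Fin m) (Fin l) ℝ} :
    v ∈ Dloc m l d ↔
      (∀ i j, ‖columnVec v i - columnVec v j‖ ≤ d i j) ∧ ∑ i, columnVec v i = 0 := by
  simp only [Dloc, Set.mem_ofPred_eq, norm_columnVec_sub, sum_columnVec_eq_zero_iff]

lemma bddAbove_image_Dloc {m l : ℕ} (d : Fin l → Fin l → ℝ) (z : Matrix (Fin m) (Fin l) ℝ) :
    BddAbove ((fun v : Matrix (Fin m) (Fin l) ℝ => ∑ a, ∑ i, z a i * v a i) '' Dloc m l d) := by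
  refine ⟨∑ i, ‖columnVec z i‖ * ((∑ j, d i j) / l), ?_⟩
  rintro _ ⟨v, hv, rfl⟩
  obtain ⟨hdist, hsum⟩ := mem_Dloc_iff.mp hv
  have hnorm (i : Fin l) : ‖columnVec v i‖ ≤ (∑ j, d i j) / l := by
    rw [le_div_iff₀' (by exact_mod_cast i.pos)]
    calc (l : ℝ) * ‖columnVec v i‖ ≤ ∑ j, ‖columnVec v i - columnVec v j‖ := by
          simpa using card_mul_norm_le_sum_norm_sub hsum i
      _ ≤ ∑ j, d i j := sum_le_sum fun j _ => hdist i j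
  dsimp only
  rw [sum_sum_mul_eq_sum_inner]
  exact sum_le_sum fun i _ => (real_inner_le_norm _ _).trans
    (mul_le_mul_of_nonneg_left (hnorm i) (norm_nonneg _))

theorem stmt_10_general (m l : ℕ)
    (d : Fin l → Fin l → ℝ)
    (hd0 : ∀ i, d i i = 0)
    (hdpos : ∀ i j, i ≠ j → 0 < d i j)
    (c : ℝ) (hc : IsLeast {x : ℝ | ∃ i j : Fin l, i ≠ j ∧ x = d i j} c) :
    ∀ w : Matrix (Fin m) (Fin l) ℝ, (∀ a, ∑ i, w a i = 0) →
      c / 2 * ∑ i, Real.sqrt (∑ a, w a i ^ 2) ≤ Psid m l d w := by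
  intro w hw
  obtain ⟨⟨i₀, j₀, hij₀, rfl⟩, hmin⟩ := hc
  obtain ⟨v, hv_sum, hv_dist, hv_inner⟩ := exists_sum_eq_zero_norm_sub_le_inner_eq
    ((sum_columnVec_eq_zero_iff w).mpr hw) (half_pos (hdpos i₀ j₀ hij₀)).le
  have hmem : ofColumns v ∈ Dloc m l d := by
    rw [mem_Dloc_iff, columnVec_ofColumns]
    refine ⟨fun i j => ?_, hv_sum⟩
    rcases eq_or_ne i j with rfl | hij
    · simp [hd0]
    · calc ‖v i - v j‖ ≤ 2 * (d i₀ j₀ / 2) := hv_dist i j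
        _ = d i₀ j₀ := by ring
        _ ≤ d i j := hmin ⟨i, j, hij, rfl⟩
  refine le_csSup (bddAbove_image_Dloc d w) ⟨ofColumns v, hmem, ?_⟩
  simp only [sum_sum_mul_eq_sum_inner, columnVec_ofColumns, hv_inner, norm_columnVec]

/-- For a metric `d` on `{1,…,l}` (`l ≥ 2`, `m ≥ 1`) and
`c = min_{i ≠ j} d(i,j)`, `Ψ_d` satisfies the lower-boundedness condition with `λ_l = c`:
for every `w ∈ ℝ^{m×l}` with columns summing to zero, `Ψ_d(w) ≥ (c/2) ∑_i ‖w^i‖₂`. -/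
theorem stmt_10 (m l : ℕ) (hm : 1 ≤ m) (hl : 2 ≤ l)
    (d : Fin l → Fin l → ℝ)
    (hd0 : ∀ i, d i i = 0)
    (hdsymm : ∀ i j, d i j = d j i)
    (hdpos : ∀ i j, i ≠ j → 0 < d i j)
    (hdtri : ∀ i j r, d i r ≤ d i j + d j r)
    (c : ℝ) (hc : IsLeast {x : ℝ | ∃ i j : Fin l, i ≠ j ∧ x = d i j} c) :
    ∀ w : Matrix (Fin m) (Fin l) ℝ, (∀ a, ∑ i, w a i = 0) →
      c / 2 * ∑ i, Real.sqrt (∑ a, w a i ^ 2) ≤ Psid m l d w :=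
  stmt_10_general m l d hd0 hdpos c hc
end

section
/- Let l ≥ 1, let Ω be an arbitrary set, let u : Ω → ℝ^l, and fix any finite sequence γ^1, ..., γ^k with γ^{k'} = (i^{k'}, α^{k'}) ∈ {1,...,l} × [0,1]. Define the sequence of Algorithm 1 by: U^0 = Ω, u^0 = u, and for k' ≥ 1, M^{k'} = U^{k'−1} ∩ {x ∈ Ω : u^{k'−1}_{i^{k'}}(x) > α^{k'}}, u^{k'} = e^{i^{k'}} on M^{k'} and u^{k'} = u^{k'−1} on Ω \ M^{k'}, U^{k'} = U^{k'−1} \ M^{k'}. Define the simplified sequence by v^0 = u and v^{k'}(x) = e^{i^{k'}} if v^{k'−1}_{i^{k'}}(x) > α^{k'}, and v^{k'}(x) = v^{k'−1}(x) otherwise. Then u^{k'} = v^{k'} on all of Ω for every 0 ≤ k' ≤ k; i.e., the simplified update without tracking the unassigned set produces exactly the same sequence of labelings as Algorithm 1. -/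
/-!
Points leave the unassigned set only by receiving a unit label `e^j`, and the thresholds are
nonnegative, so once a point carries `e^j` the simplified update can fire at it only in
coordinate `j` (every other coordinate is `0`), where it rewrites `e^j` to itself. Hence the
two updates agree, by induction with the invariant "equal values, and a unit label off `U`".
-/

theorem Pi.single_eq_of_lt_single_apply {ι R : Type*} [DecidableEq ι] [Preorder R] [Zero R]
    {α c : R} (hα : 0 ≤ α) {i j : ι} (h : α < (Pi.single j c : ι → R) i) :
    (Pi.single j c : ι → R) = Pi.single i c := by
  by_cases hij : i = j
  · rw [hij]
  · rw [Pi.single_eq_of_ne hij] at h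
    exact absurd (hα.trans_lt h) (lt_irrefl 0)

/-- One step of Algorithm 1 at a single point: `inU`/`inM` are membership in `U^{k'-1}`/`M^{k'}`,
`u, v` the common old value and `u', v'` the new values of the two sequences. -/
theorem rounding_step_agree {ι R : Type*} [DecidableEq ι] [Preorder R] [Zero R] [One R]
    {i : ι} {α : R} (hα : 0 ≤ α) {inU inM : Prop} {u u' v' : ι → R}
    (hM : inM ↔ inU ∧ α < u i)
    (hu' : (inM → u' = Pi.single i 1) ∧ (¬ inM → u' = u))
    (hv' : (α < u i → v' = Pi.single i 1) ∧ (¬ α < u i → v' = u))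
    (hlabel : ¬ inU → ∃ j, u = Pi.single j 1) :
    u' = v' ∧ (¬ (inU ∧ ¬ inM) → ∃ j, u' = Pi.single j 1) := by
  by_cases hlt : α < u i
  · rw [hv'.1 hlt]
    by_cases hU : inU
    · have hin : inM := hM.2 ⟨hU, hlt⟩
      exact ⟨hu'.1 hin, fun _ => ⟨i, hu'.1 hin⟩⟩
    · obtain ⟨j, hj⟩ := hlabel hU
      have hout : ¬ inM := fun h => hU (hM.1 h).1
      rw [hu'.2 hout, hj]
      rw [hj] at hlt
      exact ⟨Pi.single_eq_of_lt_single_apply hα hlt, fun _ => ⟨j, rfl⟩⟩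
  · have hout : ¬ inM := fun h => hlt (hM.1 h).2
    rw [hv'.2 hlt, hu'.2 hout]
    exact ⟨rfl, fun h => hlabel fun hU => h ⟨hU, hout⟩⟩

theorem stmt_13_general (l k : ℕ)
    {Ω : Type*} (u : Ω → Fin l → ℝ)
    (γ : Fin k → Fin l × ℝ) (hγ : ∀ n, (γ n).2 ∈ Set.Icc (0:ℝ) 1)
    (uSeq : ℕ → Ω → Fin l → ℝ) (USeq : ℕ → Set Ω) (M : Fin k → Set Ω)
    (hu0 : uSeq 0 = u) (hU0 : USeq 0 = Set.univ)
    (hM : ∀ n : Fin k, M n = USeq n ∩ {x | (γ n).2 < uSeq n x ((γ n).1)})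
    (hustep : ∀ n : Fin k, ∀ x : Ω,
      (x ∈ M n → uSeq ((n : ℕ) + 1) x = Pi.single (γ n).1 1) ∧
      (x ∉ M n → uSeq ((n : ℕ) + 1) x = uSeq n x))
    (hUstep : ∀ n : Fin k, USeq ((n : ℕ) + 1) = USeq n \ M n)
    (vSeq : ℕ → Ω → Fin l → ℝ)
    (hv0 : vSeq 0 = u)
    (hvstep : ∀ n : Fin k, ∀ x : Ω,
      ((γ n).2 < vSeq n x ((γ n).1) → vSeq ((n : ℕ) + 1) x = Pi.single (γ n).1 1) ∧
      (¬ (γ n).2 < vSeq n x ((γ n).1) → vSeq ((n : ℕ) + 1) x = vSeq n x)) :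
    ∀ n ≤ k, ∀ x : Ω, uSeq n x = vSeq n x := by
  suffices h : ∀ n ≤ k, ∀ x : Ω,
      uSeq n x = vSeq n x ∧ (x ∉ USeq n → ∃ j, uSeq n x = Pi.single j 1) from
    fun n hn x => (h n hn x).1
  intro n
  induction n with
  | zero => exact fun _ x => ⟨by rw [hu0, hv0], fun hx => absurd (hU0 ▸ Set.mem_univ x) hx⟩
  | succ m ih =>
    intro hmk x
    obtain ⟨heq, hlabel⟩ := ih (Nat.le_of_succ_le hmk) x
    let n : Fin k := ⟨m, hmk⟩
    have hmem : x ∈ M n ↔ x ∈ USeq m ∧ (γ n).2 < uSeq m x (γ n).1 := by rw [hM n]; rfl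
    have hv' := hvstep n x
    rw [← heq] at hv'
    rw [show USeq (m + 1) = USeq m \ M n from hUstep n]
    exact rounding_step_agree (hγ n).1 hmem (hustep n x) hv' hlabel

/-- For any set `Ω`, any `u : Ω → ℝ^l` and any fixed finite parameter sequence
`γ^1, …, γ^k` in `{1,…,l} × [0,1]`, the sequence of Algorithm 1 (which tracks the unassigned
set `U`) coincides on all of `Ω` with the simplified sequence
`v^{k'}(x) = e^{i^{k'}}` if `v^{k'-1}_{i^{k'}}(x) > α^{k'}`, else `v^{k'-1}(x)`. -/
theorem stmt_13 (l k : ℕ) (hl : 1 ≤ l)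
    {Ω : Type*} (u : Ω → Fin l → ℝ)
    (γ : Fin k → Fin l × ℝ) (hγ : ∀ n, (γ n).2 ∈ Set.Icc (0:ℝ) 1)
    (uSeq : ℕ → Ω → Fin l → ℝ) (USeq : ℕ → Set Ω) (M : Fin k → Set Ω)
    (hu0 : uSeq 0 = u) (hU0 : USeq 0 = Set.univ)
    (hM : ∀ n : Fin k, M n = USeq n ∩ {x | (γ n).2 < uSeq n x ((γ n).1)})
    (hustep : ∀ n : Fin k, ∀ x : Ω,
      (x ∈ M n → uSeq ((n : ℕ) + 1) x = Pi.single (γ n).1 1) ∧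
      (x ∉ M n → uSeq ((n : ℕ) + 1) x = uSeq n x))
    (hUstep : ∀ n : Fin k, USeq ((n : ℕ) + 1) = USeq n \ M n)
    (vSeq : ℕ → Ω → Fin l → ℝ)
    (hv0 : vSeq 0 = u)
    (hvstep : ∀ n : Fin k, ∀ x : Ω,
      ((γ n).2 < vSeq n x ((γ n).1) → vSeq ((n : ℕ) + 1) x = Pi.single (γ n).1 1) ∧
      (¬ (γ n).2 < vSeq n x ((γ n).1) → vSeq ((n : ℕ) + 1) x = vSeq n x)) :
    ∀ n ≤ k, ∀ x : Ω, uSeq n x = vSeq n x :=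
  stmt_13_general l k u γ hγ uSeq USeq M hu0 hU0 hM hustep hUstep vSeq hv0 hvstep
end
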